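/- For every h ∈ ℕ and variables Z_1,…,Z_h, substituting X_𝓘 := Z_{|𝓘|} for every nonempty subset 𝓘 ⊆ {1,…,h} in the generalized Igusa function yields I^wo_h((Z_{|𝓘|})_𝓘) = I_h(1; Z_1,…,Z_h) as rational functions in Z_1,…,Z_h over ℚ. -/

import Mathlib

noncomputable section

/-- The Gaussian binomial coefficient `binom(a,b)_Y`, as an element of a field,
evaluated at `Y`. -/
def gaussBinom {K : Type*} [Field K] (Y : K) (a b : ℕ) : K :=
  (∏ i ∈ Finset.Icc (a - b + 1) a, (1 - Y ^ i)) / ∏ i ∈ Finset.Icc 1 b, (1 - Y ^ i)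

def gaussMultinomAux {K : Type*} [Field K] (Y : K) : ℕ → List ℕ → K
  | _, [] => 1
  | n, i :: is => gaussBinom Y n i * gaussMultinomAux Y i is

/-- The Gaussian multinomial coefficient `binom(n, I)_Y`:
for `I = {i₁ < ⋯ < iₘ}`, this is `binom(n,iₘ)_Y · binom(iₘ,i_{m-1})_Y ⋯ binom(i₂,i₁)_Y`. -/
def gaussMultinom {K : Type*} [Field K] (Y : K) (n : ℕ) (I : Finset ℕ) : K :=
  gaussMultinomAux Y n ((I.sort (· ≤ ·)).reverse)

def multinomAux : ℕ → List ℕ → ℕ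
  | _, [] => 1
  | n, i :: is => n.choose i * multinomAux i is

/-- The ordinary multinomial coefficient `binom(n, I)`, the value of `binom(n,I)_Y` at `Y = 1`. -/
def multinom (n : ℕ) (I : Finset ℕ) : ℕ :=
  multinomAux n ((I.sort (· ≤ ·)).reverse)

/-- The Igusa function `I_h(Y; X_1, …, X_h)`. -/
def igusa {K : Type*} [Field K] (h : ℕ) (Y : K) (X : ℕ → K) : K :=
  (1 - X h)⁻¹ * ∑ I ∈ (Finset.Icc 1 (h - 1)).powerset,
    gaussMultinom Y h I * ∏ i ∈ I, X i / (1 - X i)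

/-- The Igusa function `I_h^∘(Y; X_1, …, X_h)`. -/
def igusaCirc {K : Type*} [Field K] (h : ℕ) (Y : K) (X : ℕ → K) : K :=
  X h * igusa h Y X

/-- The Igusa function at `Y = 1`, `I_h(1; X_1, …, X_h)`, with ordinary multinomials. -/
def igusaOne {K : Type*} [Field K] (h : ℕ) (X : ℕ → K) : K :=
  (1 - X h)⁻¹ * ∑ I ∈ (Finset.Icc 1 (h - 1)).powerset,
    (multinom h I : K) * ∏ i ∈ I, X i / (1 - X i)

/-- The chains (of arbitrary finite length, including the empty chain) of nonempty proper
subsets of `{1, …, h}`, encoded as finsets of subsets that are totally ordered by inclusion. -/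
def chainsOn (h : ℕ) : Finset (Finset (Finset ℕ)) :=
  ((Finset.Icc 1 h).powerset.filter
      (fun I => I ≠ ∅ ∧ I ≠ Finset.Icc 1 h)).powerset.filter
    (fun C => ∀ I ∈ C, ∀ J ∈ C, I ⊆ J ∨ J ⊆ I)

/-- The generalized Igusa function `I^wo_h((X_𝓘)_𝓘)`, with variables indexed by the
nonempty subsets of `{1, …, h}`. -/
def igusaWO {K : Type*} [Field K] (h : ℕ) (X : Finset ℕ → K) : K :=
  (1 - X (Finset.Icc 1 h))⁻¹ * ∑ C ∈ chainsOn h, ∏ I ∈ C, X I / (1 - X I)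

/-- The Igusa function `I_h(Y; X_1, …, X_h)` with power series arguments. -/
def igusaPS (h : ℕ) (Y : ℚ) (X : ℕ → PowerSeries ℚ) : PowerSeries ℚ :=
  (1 - X h)⁻¹ * ∑ I ∈ (Finset.Icc 1 (h - 1)).powerset,
    (PowerSeries.C : ℚ →+* PowerSeries ℚ) (gaussMultinom Y h I) * ∏ i ∈ I, X i * (1 - X i)⁻¹

/-- The Igusa function `I_h^∘(Y; X_1, …, X_h)` with power series arguments. -/
def igusaCircPS (h : ℕ) (Y : ℚ) (X : ℕ → PowerSeries ℚ) : PowerSeries ℚ :=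
  X h * igusaPS h Y X

/-- The Igusa function `I_h(1; X_1, …, X_h)` with power series arguments. -/
def igusaOnePS (h : ℕ) (X : ℕ → PowerSeries ℚ) : PowerSeries ℚ :=
  (1 - X h)⁻¹ * ∑ I ∈ (Finset.Icc 1 (h - 1)).powerset,
    (multinom h I : PowerSeries ℚ) * ∏ i ∈ I, X i * (1 - X i)⁻¹

/-- The generalized Igusa function `I^wo_h` with power series arguments. -/
def igusaWOPS (h : ℕ) (X : Finset ℕ → PowerSeries ℚ) : PowerSeries ℚ :=
  (1 - X (Finset.Icc 1 h))⁻¹ * ∑ C ∈ chainsOn h, ∏ I ∈ C, X I * (1 - X I)⁻¹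

/-- `lam` encodes a partition `λ_1 ≥ ⋯ ≥ λ_n ≥ 0` with at most `n` parts
(indexed from `1`; the irrelevant values `lam 0` and `lam j` for `j > n` are zero). -/
def IsPartition (n : ℕ) (lam : ℕ → ℕ) : Prop :=
  (∀ j, 1 ≤ j → lam (j + 1) ≤ lam j) ∧ ∀ j, j = 0 ∨ n < j → lam j = 0

/-- `ℓ` encodes an `n`-tuple of non-negative integers, indexed from `1`
(the irrelevant values at `0` and beyond `n` are zero). -/
def IsTuple (n : ℕ) (ℓ : ℕ → ℕ) : Prop :=
  ∀ j, j = 0 ∨ n < j → ℓ j = 0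

/-- The dual partition: `λ'_k = #{j ∈ {1,…,n} : λ_j ≥ k}`. -/
def dualPart (n : ℕ) (lam : ℕ → ℕ) (k : ℕ) : ℕ :=
  ((Finset.Icc 1 n).filter fun j => k ≤ lam j).card

/-- `α(λ, μ; p)`: the number of subgroups of `⊕_{k=1}^n ℤ/p^{λ_k}ℤ` that are isomorphic
to `⊕_{k=1}^n ℤ/p^{μ_k}ℤ`. -/
def alphaCount (p n : ℕ) (lam mu : ℕ → ℕ) : ℕ :=
  Nat.card {H : AddSubgroup ((j : Fin n) → ZMod (p ^ lam (j.1 + 1))) //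
    Nonempty (H ≃+ ((j : Fin n) → ZMod (p ^ mu (j.1 + 1))))}

/-- `β(λ)`: the number of `n`-tuples `ℓ ∈ ℕ₀ⁿ` whose non-increasing rearrangement is `λ`. -/
def betaCount (n : ℕ) (lam : ℕ → ℕ) : ℕ :=
  Nat.card {ℓ : Fin n → ℕ // ∃ σ : Equiv.Perm (Fin n), ∀ j, ℓ (σ j) = lam (j.1 + 1)}

/-- `(r, L, M)` are the parameters of a Dyck word of length `2n`:
`w = 0^{L_1}1^{M_1}0^{L_2-L_1}1^{M_2-M_1}⋯0^{L_r-L_{r-1}}1^{M_r-M_{r-1}}`. -/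
def DyckParams (n r : ℕ) (L M : ℕ → ℕ) : Prop :=
  1 ≤ r ∧ L 0 = 0 ∧ M 0 = 0 ∧ L r = n ∧ M r = n ∧
    ∀ i ∈ Finset.Icc 1 r, L (i - 1) < L i ∧ M (i - 1) < M i ∧ M i ≤ L i

/-- `w(μ, λ) = w` for the Dyck word `w` with parameters `(r, L, M)`:
`λ_{L_i} ≥ μ_{M_{i-1}+1}` for `i ∈ {1,…,r}` and `μ_{M_i} > λ_{L_i+1}` for `i ∈ {1,…,r-1}`. -/
def WMatch (r : ℕ) (L M : ℕ → ℕ) (mu lam : ℕ → ℕ) : Prop :=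
  (∀ i ∈ Finset.Icc 1 r, mu (M (i - 1) + 1) ≤ lam (L i)) ∧
    ∀ i ∈ Finset.Icc 1 (r - 1), lam (L i + 1) < mu (M i)

/-- `t_i = |𝒜_1| + ⋯ + |𝒜_i|` for an ordered set partition `𝒜`. -/
def tpar (𝒜 : ℕ → Finset ℕ) (i : ℕ) : ℕ :=
  ∑ k ∈ Finset.Icc 1 i, (𝒜 k).card

/-- The `j`-th smallest element of a finite set of naturals (`j` counted from `1`). -/
def sortedElt (A : Finset ℕ) (j : ℕ) : ℕ :=
  (A.sort (· ≤ ·)).getD (j - 1) 0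

/-- `ε^{(i)}(𝓘) = L_{i-1} + ∑_{j ∈ 𝓘} f_{a^{(i)}_j}`, where `a^{(i)}_1 < ⋯` are the
elements of `𝒜_i`. -/
def epsA (f L : ℕ → ℕ) (𝒜 : ℕ → Finset ℕ) (i : ℕ) (I : Finset ℕ) : ℕ :=
  L (i - 1) + ∑ j ∈ I, f (sortedElt (𝒜 i) j)

/-- The number of ideals of additive index `m` in the Heisenberg Lie ring `L(R) = R⊕R⊕R`
with bracket `[(a,b,c),(a',b',c')] = (0,0,ab'-a'b)`. -/
def heisenbergIdealCount (R : Type*) [CommRing R] (m : ℕ) : ℕ :=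
  Nat.card {I : AddSubgroup (R × R × R) //
    (∀ x ∈ I, ∀ y : R × R × R, (0, 0, y.1 * x.2.1 - x.1 * y.2.1) ∈ I) ∧ I.index = m}

/-- The explicit rational function `E^f_{w,𝒜}(X,Y)` attached to a Dyck word with parameters
`(r, L, M)` and a compatible ordered set partition `𝒜` of `{1,…,g}`. -/
def Efun {F : Type*} [Field F] (n r : ℕ) (f L M : ℕ → ℕ) (𝒜 : ℕ → Finset ℕ)
    (Xv Yv : F) : F :=
  (∏ i ∈ Finset.Icc 1 r, gaussBinom Xv⁻¹ (L i - M (i - 1)) (L i - M i)) *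
    (∏ i ∈ Finset.Icc 1 r, igusaWO (tpar 𝒜 i - tpar 𝒜 (i - 1))
      (fun I => Xv ^ ((2 * n - M (i - 1) + epsA f L 𝒜 i I) * M (i - 1)) *
        Yv ^ (2 * epsA f L 𝒜 i I + M (i - 1)))) *
    (∏ i ∈ Finset.Icc 1 (r - 1), igusaCirc (M i - M (i - 1)) Xv⁻¹
      (fun j => Xv ^ ((M (i - 1) + j) * (2 * n + L i - (M (i - 1) + j))) *
        Yv ^ (2 * L i + M (i - 1) + j))) *
    igusa (n - M (r - 1)) Xv⁻¹
      (fun j => Xv ^ ((M (r - 1) + j) * (2 * n + L r - (M (r - 1) + j))) *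
        Yv ^ (2 * L r + M (r - 1) + j))

/-- The power series `E^f_{w,𝒜}(p,t)`, the explicit rational function `E^f_{w,𝒜}`
evaluated at `X = p`, `Y = t` and expanded as a power series in `t`. -/
def EfunPS (p n r : ℕ) (f L M : ℕ → ℕ) (𝒜 : ℕ → Finset ℕ) : PowerSeries ℚ :=
  (∏ i ∈ Finset.Icc 1 r,
      (PowerSeries.C : ℚ →+* PowerSeries ℚ) (gaussBinom ((p : ℚ)⁻¹) (L i - M (i - 1)) (L i - M i))) *
    (∏ i ∈ Finset.Icc 1 r, igusaWOPS (tpar 𝒜 i - tpar 𝒜 (i - 1))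
      (fun I => (PowerSeries.C : ℚ →+* PowerSeries ℚ) ((p : ℚ) ^ ((2 * n - M (i - 1) + epsA f L 𝒜 i I) * M (i - 1))) *
        PowerSeries.X ^ (2 * epsA f L 𝒜 i I + M (i - 1)))) *
    (∏ i ∈ Finset.Icc 1 (r - 1), igusaCircPS (M i - M (i - 1)) ((p : ℚ)⁻¹)
      (fun j => (PowerSeries.C : ℚ →+* PowerSeries ℚ) ((p : ℚ) ^ ((M (i - 1) + j) * (2 * n + L i - (M (i - 1) + j)))) *
        PowerSeries.X ^ (2 * L i + M (i - 1) + j))) *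
    igusaPS (n - M (r - 1)) ((p : ℚ)⁻¹)
      (fun j => (PowerSeries.C : ℚ →+* PowerSeries ℚ) ((p : ℚ) ^ ((M (r - 1) + j) * (2 * n + L r - (M (r - 1) + j)))) *
        PowerSeries.X ^ (2 * L r + M (r - 1) + j))

/-- The set of canonical representatives `(r, L, M, 𝒜)` of all pairs consisting of
a Dyck word `w` of length `2n` and an ordered set partition `𝒜` of `{1,…,g}`
compatible with `w`. -/
def dyckPartData (g n : ℕ) (f : ℕ → ℕ) : Set (ℕ × (ℕ → ℕ) × (ℕ → ℕ) × (ℕ → Finset ℕ)) :=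
  {d | DyckParams n d.1 d.2.1 d.2.2.1 ∧
    (∀ j, d.1 < j → d.2.1 j = n ∧ d.2.2.1 j = n) ∧
    (∀ i ∈ Finset.Icc 1 d.1, (d.2.2.2 i).Nonempty) ∧
    (∀ i ∈ Finset.Icc 1 d.1, ∀ j ∈ Finset.Icc 1 d.1, i ≠ j → Disjoint (d.2.2.2 i) (d.2.2.2 j)) ∧
    (Finset.Icc 1 d.1).biUnion d.2.2.2 = Finset.Icc 1 g ∧
    (∀ i ∈ Finset.Icc 1 d.1, ∑ j ∈ d.2.2.2 i, f j = d.2.1 i - d.2.1 (i - 1)) ∧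
    (∀ j, j = 0 ∨ d.1 < j → d.2.2.2 j = ∅)}

/-- The explicit rational function `W^f(X,Y)` expressing the local normal zeta function of
the Heisenberg group at an unramified prime with residue degrees `f_1, …, f_g`. -/
def Wfun {F : Type*} [Field F] (g n : ℕ) (f : ℕ → ℕ) (Xv Yv : F) : F :=
  (∏ i ∈ Finset.Icc 1 g, (1 - Yv ^ (2 * f i))) *
    (∏ i ∈ Finset.range (2 * n), (1 - Xv ^ i * Yv)⁻¹) *
    ∑ᶠ d ∈ dyckPartData g n f, Efun n d.1 f d.2.1 d.2.2.1 d.2.2.2 Xv Yv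
end

/-!
Since `card` is injective on a chain, the summand of a chain `C` after the substitution depends
only on the set `I` of cardinalities of its members, and `C` consists of nonempty proper subsets
of `{1, …, h}` iff `I ⊆ {1, …, h - 1}`. The chains of subsets of an `n`-set with cardinalities
`i₁ < ⋯ < iₘ` are counted by choosing the largest member (`binom(n, iₘ)` ways) and then,
recursively, a chain inside it with cardinalities `i₁ < ⋯ < i_{m-1}`: there are `binom(n, I)`.
-/

open Finset

section Chains

variable {α : Type*}

theorem injOn_card_of_chain {C : Finset (Finset α)} (hC : ∀ A ∈ C, ∀ B ∈ C, A ⊆ B ∨ B ⊆ A) :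
    Set.InjOn card (C : Set (Finset α)) := fun A hA B hB hAB =>
  (hC A hA B hB).elim (fun h => eq_of_subset_of_card_le h hAB.ge)
    (fun h => (eq_of_subset_of_card_le h hAB.le).symm)

theorem ne_empty_and_ne_iff_card_mem_Icc {A S : Finset α} (hA : A ⊆ S) :
    A ≠ ∅ ∧ A ≠ S ↔ A.card ∈ Icc 1 (S.card - 1) := by
  have hne : A ≠ S ↔ A.card < S.card :=
    ⟨fun h => card_lt_card (ssubset_of_subset_of_ne hA h), fun h e => h.ne (congrArg card e)⟩
  rw [hne, ← nonempty_iff_ne_empty, ← card_pos, mem_Icc]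
  omega

variable [DecidableEq α]

def chainsWithCards (S : Finset α) (I : Finset ℕ) : Finset (Finset (Finset α)) :=
  S.powerset.powerset.filter
    (fun C => (∀ A ∈ C, ∀ B ∈ C, A ⊆ B ∨ B ⊆ A) ∧ C.image card = I)

theorem mem_chainsWithCards {S : Finset α} {I : Finset ℕ} {C : Finset (Finset α)} :
    C ∈ chainsWithCards S I ↔
      (∀ A ∈ C, A ⊆ S) ∧ (∀ A ∈ C, ∀ B ∈ C, A ⊆ B ∨ B ⊆ A) ∧ C.image card = I := by
  simp [chainsWithCards, subset_iff]

theorem card_lt_of_mem_chainsWithCards {T A : Finset α} {J : Finset ℕ} {C : Finset (Finset α)}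
    {i : ℕ} (hJ : ∀ j ∈ J, j < i) (hC : C ∈ chainsWithCards T J) (hA : A ∈ C) : A.card < i :=
  hJ _ ((mem_chainsWithCards.1 hC).2.2 ▸ mem_image_of_mem card hA)

theorem chainsWithCards_insert (S : Finset α) {i : ℕ} {J : Finset ℕ} (hJ : ∀ j ∈ J, j < i) :
    chainsWithCards S (insert i J) =
      (S.powersetCard i).biUnion fun T => (chainsWithCards T J).image (insert T) := by
  ext C
  simp only [mem_biUnion, mem_image, mem_powersetCard, mem_chainsWithCards]
  constructor
  · rintro ⟨hsub, hchain, himg⟩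
    obtain ⟨T, hT, rfl⟩ := mem_image.1 (himg ▸ mem_insert_self i J)
    have hcard : ∀ A ∈ C.erase T, A.card ∈ J := fun A hA =>
      (mem_insert.1 (himg ▸ mem_image_of_mem card (mem_of_mem_erase hA))).resolve_left
        fun h => ne_of_mem_erase hA (injOn_card_of_chain hchain (mem_of_mem_erase hA) hT h)
    have hsubT : ∀ A ∈ C.erase T, A ⊆ T := fun A hA =>
      (hchain A (mem_of_mem_erase hA) T hT).resolve_right
        fun h => (hJ _ (hcard A hA)).not_ge (card_le_card h)
    refine ⟨T, ⟨hsub T hT, rfl⟩, C.erase T, ⟨hsubT, fun A hA B hB =>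
      hchain A (mem_of_mem_erase hA) B (mem_of_mem_erase hB), ?_⟩, insert_erase hT⟩
    refine Subset.antisymm (fun j hj => ?_) fun j hj => ?_
    · obtain ⟨A, hA, rfl⟩ := mem_image.1 hj
      exact hcard A hA
    · obtain ⟨A, hA, rfl⟩ := mem_image.1 (himg ▸ mem_insert_of_mem hj)
      refine mem_image_of_mem card (mem_erase.2 ⟨?_, hA⟩)
      rintro rfl
      exact (hJ _ hj).false
  · rintro ⟨T, ⟨hTS, rfl⟩, D, ⟨hsub, hchain, rfl⟩, rfl⟩
    refine ⟨?_, ?_, image_insert ..⟩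
    · simp only [mem_insert, forall_eq_or_imp]
      exact ⟨hTS, fun A hA => (hsub A hA).trans hTS⟩
    · simp only [mem_insert, forall_eq_or_imp, subset_refl, true_or, true_and]
      exact ⟨fun B hB => Or.inr (hsub B hB), fun A hA =>
        ⟨Or.inl (hsub A hA), fun B hB => hchain A hA B hB⟩⟩

theorem card_chainsWithCards_toFinset (S : Finset α) {l : List ℕ} (hl : l.Pairwise (· > ·)) :
    (chainsWithCards S l.toFinset).card = multinomAux S.card l := by
  induction l generalizing S with
  | nil =>
    have : chainsWithCards S (∅ : Finset ℕ) = {∅} := by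
      ext C
      rw [mem_chainsWithCards, image_eq_empty, mem_singleton]
      exact ⟨fun h => h.2.2, by rintro rfl; simp⟩
    simp [this, multinomAux]
  | cons i l ih =>
    have hlt : ∀ j ∈ l.toFinset, j < i := fun j hj =>
      List.rel_of_pairwise_cons hl (List.mem_toFinset.1 hj)
    have hT : ∀ {T T' : Finset α} {D}, D ∈ chainsWithCards T' l.toFinset → T.card = i → T ∉ D :=
      fun hD hTi hTD => (card_lt_of_mem_chainsWithCards hlt hD hTD).ne hTi
    rw [List.toFinset_cons, chainsWithCards_insert S hlt, card_biUnion, multinomAux,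
      ← card_powersetCard i S, ← smul_eq_mul, ← sum_const]
    · refine sum_congr rfl fun T hTmem => ?_
      have hTi := (mem_powersetCard.1 hTmem).2
      rw [card_image_of_injOn, ← hTi, ih T hl.of_cons]
      intro D hD D' hD' hDD'
      rw [← erase_insert (hT hD hTi), ← erase_insert (hT hD' hTi)]
      exact congrArg (·.erase T) hDD'
    · intro T hTmem T' _ hne
      refine disjoint_left.2 fun C hC hC' => hne ?_
      obtain ⟨D, -, rfl⟩ := mem_image.1 hC
      obtain ⟨D', hD', hDD'⟩ := mem_image.1 hC'
      exact (mem_insert.1 (hDD' ▸ mem_insert_self T D)).resolve_right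
        (hT hD' (mem_powersetCard.1 hTmem).2)

theorem card_chainsWithCards (S : Finset α) (I : Finset ℕ) :
    (chainsWithCards S I).card = multinom S.card I := by
  have hsorted : ((I.sort (· ≤ ·)).reverse).Pairwise (· > ·) :=
    List.pairwise_reverse.2 I.sortedLT_sort.pairwise
  rw [multinom, ← card_chainsWithCards_toFinset S hsorted, List.toFinset_reverse, sort_toFinset]

end Chains

theorem mem_chainsOn_iff {h : ℕ} {C : Finset (Finset ℕ)} :
    C ∈ chainsOn h ↔
      C ∈ chainsWithCards (Icc 1 h) (C.image card) ∧ C.image card ⊆ Icc 1 (h - 1) := by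
  have hcard : ∀ A ⊆ Icc 1 h, A ≠ ∅ ∧ A ≠ Icc 1 h ↔ A.card ∈ Icc 1 (h - 1) := fun A hA => by
    simpa using ne_empty_and_ne_iff_card_mem_Icc hA
  simp only [chainsOn, mem_filter, mem_powerset, mem_chainsWithCards, and_true, image_subset_iff]
  refine ⟨fun ⟨hC, hchain⟩ => ⟨⟨fun A hA => ?_, hchain⟩, fun A hA => ?_⟩,
    fun ⟨⟨hC, hchain⟩, hcardC⟩ => ⟨fun A hA => ?_, hchain⟩⟩
  · exact mem_powerset.1 (mem_filter.1 (hC hA)).1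
  · obtain ⟨hAS, hAne⟩ := mem_filter.1 (hC hA)
    exact (hcard A (mem_powerset.1 hAS)).1 hAne
  · exact mem_filter.2 ⟨mem_powerset.2 (hC A hA), (hcard A (hC A hA)).2 (hcardC A hA)⟩

theorem filter_chainsOn_image_card_eq {h : ℕ} {I : Finset ℕ} (hI : I ⊆ Icc 1 (h - 1)) :
    (chainsOn h).filter (fun C => C.image card = I) = chainsWithCards (Icc 1 h) I := by
  ext C
  rw [mem_filter, mem_chainsOn_iff]
  refine ⟨fun ⟨⟨hC, _⟩, himg⟩ => himg ▸ hC, fun hC => ?_⟩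
  obtain ⟨-, -, rfl⟩ := mem_chainsWithCards.1 hC
  exact ⟨⟨hC, hI⟩, rfl⟩

theorem sum_chainsOn_prod_card {R : Type*} [CommSemiring R] (h : ℕ) (g : ℕ → R) :
    ∑ C ∈ chainsOn h, ∏ A ∈ C, g A.card =
      ∑ I ∈ (Icc 1 (h - 1)).powerset, (multinom h I : R) * ∏ i ∈ I, g i := by
  have hmaps : ∀ C ∈ chainsOn h, C.image card ∈ (Icc 1 (h - 1)).powerset := fun C hC =>
    mem_powerset.2 (mem_chainsOn_iff.1 hC).2
  rw [← sum_fiberwise_of_maps_to hmaps]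
  refine sum_congr rfl fun I hI => ?_
  rw [filter_chainsOn_image_card_eq (mem_powerset.1 hI)]
  calc ∑ C ∈ chainsWithCards (Icc 1 h) I, ∏ A ∈ C, g A.card
      = ∑ C ∈ chainsWithCards (Icc 1 h) I, ∏ i ∈ I, g i := sum_congr rfl fun C hC => by
        obtain ⟨-, hchain, rfl⟩ := mem_chainsWithCards.1 hC
        exact (prod_image (injOn_card_of_chain hchain)).symm
    _ = (multinom h I : R) * ∏ i ∈ I, g i := by
        rw [sum_const, card_chainsWithCards, Nat.card_Icc, add_tsub_cancel_right, nsmul_eq_mul]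

theorem igusaWO_comp_card {K : Type*} [Field K] (h : ℕ) (Z : ℕ → K) :
    igusaWO h (fun I => Z I.card) = igusaOne h Z := by
  rw [igusaWO, igusaOne, Nat.card_Icc, add_tsub_cancel_right,
    sum_chainsOn_prod_card h fun i => Z i / (1 - Z i)]

theorem igusaWO_substitute_card_general (h : ℕ) :
    igusaWO h (fun I : Finset ℕ =>
        algebraMap (MvPolynomial ℕ ℚ) (FractionRing (MvPolynomial ℕ ℚ))
          (MvPolynomial.X I.card)) =
      igusaOne h (fun i =>
        algebraMap (MvPolynomial ℕ ℚ) (FractionRing (MvPolynomial ℕ ℚ))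
          (MvPolynomial.X i)) :=
  igusaWO_comp_card h fun i => algebraMap _ _ (MvPolynomial.X i)

/-- Substituting `X_𝓘 := Z_{|𝓘|}` for every nonempty `𝓘 ⊆ {1,…,h}` in the generalized
Igusa function yields `I^wo_h((Z_{|𝓘|})_𝓘) = I_h(1; Z_1,…,Z_h)`, as rational functions
in the variables `Z_1, …, Z_h` over `ℚ`. -/
theorem igusaWO_substitute_card (h : ℕ) (hh : 0 < h) :
    igusaWO h (fun I : Finset ℕ =>
        algebraMap (MvPolynomial ℕ ℚ) (FractionRing (MvPolynomial ℕ ℚ))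
          (MvPolynomial.X I.card)) =
      igusaOne h (fun i =>
        algebraMap (MvPolynomial ℕ ℚ) (FractionRing (MvPolynomial ℕ ℚ))
          (MvPolynomial.X i)) :=
  igusaWO_substitute_card_general h
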